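/- Let f_0 be a Littlewood polynomial (all coefficients in {-1,1}) of length ℓ, and define f_{n+1}(z) = f_n(z) + z^{len f_n} f_n†(-z). Then for all n, ‖f_n‖_4^4/‖f_n‖_2^4 = (2/3)·(‖f_0‖_4^4 + ‖f_0 f_0~‖_2^2)/‖f_0‖_2^4 + (-1/2)^n·(1/3)·(‖f_0‖_4^4 - 2‖f_0 f_0~‖_2^2)/‖f_0‖_2^4. -/

import Mathlib

noncomputable def dagger (f : Polynomial ℂ) : Polynomial ℂ :=
  ∑ j ∈ Finset.range (f.natDegree + 1),
    Polynomial.C ((starRingEnd ℂ) (f.coeff (f.natDegree - j))) * Polynomial.X ^ j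

noncomputable def circ (θ : ℝ) : ℂ := Complex.exp (θ * Complex.I)

noncomputable def n2 (f : Polynomial ℂ) : ℝ :=
  (1 / (2 * Real.pi)) * ∫ θ in (0:ℝ)..(2 * Real.pi), ‖f.eval (circ θ)‖ ^ 2

noncomputable def n4 (f : Polynomial ℂ) : ℝ :=
  (1 / (2 * Real.pi)) * ∫ θ in (0:ℝ)..(2 * Real.pi), ‖f.eval (circ θ)‖ ^ 4

noncomputable def vprod (f : Polynomial ℂ) : ℝ :=
  (1 / (2 * Real.pi)) * ∫ θ in (0:ℝ)..(2 * Real.pi), ‖f.eval (circ θ) * f.eval (-(circ θ))‖ ^ 2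

/-!
On the unit circle `dagger g (w) = w ^ d * conj (g w)` with `d = g.natDegree`, so for the step
`h = g + X ^ (d + 1) * (dagger g).comp (-X)`, with `a = g z`, `b = g (-z)` and
`u = (-1) ^ d * z ^ (2d + 1)`, one gets `h z = a + u * conj b` and `h (-z) = b - u * conj a`.
Expanding `|h z|²`, `|h z * h (-z)|²` and `|h z|⁴ + |h (-z)|⁴` leaves symmetric terms in `a, b`
plus real parts of `conj z ^ m * q z` with `q` a polynomial of degree `< m`, whose circle
averages vanish. Since `z ↦ -z` preserves the averages, this gives
`‖h‖₂² = 2‖g‖₂²`, `‖h‖₄⁴ = 2‖g‖₄⁴ + 4‖g g~‖₂²` and `‖h h~‖₂² = 2‖g‖₄⁴`,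
a linear recurrence with eigenvalues `4` and `-2`.
-/

open Polynomial Complex intervalIntegral ComplexConjugate
open scoped Real

lemma circ_add_two_pi (θ : ℝ) : circ (θ + 2 * π) = circ θ := by
  rw [circ, circ, ofReal_add, add_mul, exp_add, ofReal_mul, ofReal_ofNat, exp_two_pi_mul_I,
    mul_one]

lemma circ_add_pi (θ : ℝ) : circ (θ + π) = -circ θ := by
  simp only [circ, ofReal_add, add_mul, exp_add, exp_pi_mul_I, mul_neg_one]

lemma norm_circ (θ : ℝ) : ‖circ θ‖ = 1 := norm_exp_ofReal_mul_I θ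

lemma norm_neg_one_pow_mul_circ_pow (n m : ℕ) (θ : ℝ) : ‖(-1 : ℂ) ^ n * circ θ ^ m‖ = 1 := by
  simp [norm_circ]

@[fun_prop]
lemma continuous_circ : Continuous circ := by unfold circ; fun_prop

lemma norm_sq_add_mul_conj {a b u : ℂ} (hu : ‖u‖ = 1) :
    ‖a + u * conj b‖ ^ 2 = ‖a‖ ^ 2 + ‖b‖ ^ 2 + 2 * (conj u * (a * b)).re := by
  have hu0 : u ≠ 0 := by rintro rfl; simp at hu
  apply ofReal_injective
  push_cast
  rw [re_eq_add_conj]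
  simp only [← mul_conj', map_add, map_mul, conj_conj]
  rw [← inv_eq_conj hu]
  field_simp
  ring

lemma norm_sq_mul_add_mul_conj {a b u : ℂ} (hu : ‖u‖ = 1) :
    ‖(a + u * conj b) * (b - u * conj a)‖ ^ 2
      = ‖a‖ ^ 4 + ‖b‖ ^ 4 - 2 * (conj u ^ 2 * (a * b) ^ 2).re := by
  have hu0 : u ≠ 0 := by rintro rfl; simp at hu
  apply ofReal_injective
  push_cast
  rw [re_eq_add_conj]
  simp only [show ∀ x : ℂ, (‖x‖ : ℂ) ^ 4 = (‖x‖ ^ 2) ^ 2 by intro; ring]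
  simp only [← mul_conj', map_add, map_sub, map_mul, map_pow, conj_conj]
  rw [← inv_eq_conj hu]
  field_simp
  ring

lemma norm_pow_four_add_mul_conj {a b u : ℂ} (hu : ‖u‖ = 1) :
    ‖a + u * conj b‖ ^ 4 + ‖b - u * conj a‖ ^ 4
      = 2 * (‖a‖ ^ 4 + ‖b‖ ^ 4) + 8 * ‖a * b‖ ^ 2 + 4 * (conj u ^ 2 * (a * b) ^ 2).re := by
  have hu0 : u ≠ 0 := by rintro rfl; simp at hu
  apply ofReal_injective
  push_cast
  rw [re_eq_add_conj]
  simp only [show ∀ x : ℂ, (‖x‖ : ℂ) ^ 4 = (‖x‖ ^ 2) ^ 2 by intro; ring]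
  simp only [← mul_conj', map_add, map_sub, map_mul, map_pow, conj_conj]
  rw [← inv_eq_conj hu]
  field_simp
  ring

lemma integral_comp_neg_circ {E : Type*} [NormedAddCommGroup E] [NormedSpace ℝ E] (F : ℂ → E) :
    ∫ θ in (0:ℝ)..2 * π, F (-circ θ) = ∫ θ in (0:ℝ)..2 * π, F (circ θ) := by
  have hF : Function.Periodic (fun θ => F (circ θ)) (2 * π) := fun θ => by
    simp only [circ_add_two_pi]
  simp_rw [← circ_add_pi]
  rw [integral_comp_add_right (fun θ => F (circ θ)), zero_add, add_comm,
    hF.intervalIntegral_add_eq π 0, zero_add]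

lemma integral_circ_pow_mul_conj_pow {j m : ℕ} (hjm : j ≠ m) :
    ∫ θ in (0:ℝ)..2 * π, circ θ ^ j * conj (circ θ) ^ m = 0 := by
  have hc : ((j : ℂ) - m) * I ≠ 0 :=
    mul_ne_zero (sub_ne_zero.mpr (Nat.cast_injective.ne hjm)) I_ne_zero
  have hexp : ∀ θ : ℝ, circ θ ^ j * conj (circ θ) ^ m = exp (((j : ℂ) - m) * I * θ) := by
    intro θ
    rw [circ, ← exp_conj, ← exp_nat_mul, ← exp_nat_mul, ← exp_add]
    simp only [map_mul, conj_ofReal, conj_I]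
    ring_nf
  simp_rw [hexp]
  rw [integral_exp_mul_complex hc, div_eq_zero_iff]
  left
  have := exp_int_mul_two_pi_mul_I ((j : ℤ) - m)
  push_cast at this ⊢
  rw [mul_zero, exp_zero, sub_eq_zero, ← this]
  ring_nf

lemma integral_eval_circ_mul_conj_pow {p : ℂ[X]} {m : ℕ} (hp : p.natDegree < m) :
    ∫ θ in (0:ℝ)..2 * π, p.eval (circ θ) * conj (circ θ) ^ m = 0 := by
  simp_rw [eval_eq_sum_range' hp, Finset.sum_mul, mul_assoc]
  rw [integral_finsetSum fun j _ => Continuous.intervalIntegrable (by fun_prop) _ _]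
  refine Finset.sum_eq_zero fun j hj => ?_
  rw [integral_const_mul, integral_circ_pow_mul_conj_pow (Finset.mem_range.mp hj).ne, mul_zero]

lemma integral_add_comp_neg_circ {F : ℂ → ℝ} (hF : Continuous F) :
    ∫ θ in (0:ℝ)..2 * π, (F (circ θ) + F (-circ θ)) = 2 * ∫ θ in (0:ℝ)..2 * π, F (circ θ) := by
  rw [integral_add (Continuous.intervalIntegrable (by fun_prop) _ _)
    (Continuous.intervalIntegrable (by fun_prop) _ _), integral_comp_neg_circ, ← two_mul]

lemma integral_add_comp_neg_add_re_circ {F : ℂ → ℝ} (hF : Continuous F) (c : ℝ) {q : ℂ[X]}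
    {m : ℕ} (hq : q.natDegree < m) :
    ∫ θ in (0:ℝ)..2 * π, (F (circ θ) + F (-circ θ) + c * (q.eval (circ θ) * conj (circ θ) ^ m).re)
      = 2 * ∫ θ in (0:ℝ)..2 * π, F (circ θ) := by
  rw [integral_add (Continuous.intervalIntegrable (by fun_prop) _ _)
    (Continuous.intervalIntegrable (by fun_prop) _ _), integral_add_comp_neg_circ hF,
    integral_const_mul]
  have hre := intervalIntegral_re (𝕜 := ℂ) (μ := MeasureTheory.volume) (a := 0) (b := 2 * π)
    (f := fun θ => q.eval (circ θ) * conj (circ θ) ^ m)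
    (Continuous.intervalIntegrable (by fun_prop) _ _)
  simp only [RCLike.re_to_complex] at hre
  rw [hre, integral_eval_circ_mul_conj_pow hq, zero_re, mul_zero, add_zero]

lemma eval_dagger (f : ℂ[X]) {w : ℂ} (hw : ‖w‖ = 1) :
    (dagger f).eval w = w ^ f.natDegree * conj (f.eval w) := by
  have hw0 : w ≠ 0 := by rintro rfl; simp at hw
  rw [dagger, eval_finsetSum, eval_eq_sum_range, map_sum, Finset.mul_sum,
    ← Finset.sum_range_reflect]
  refine Finset.sum_congr rfl fun j hj => ?_
  have hjd : j ≤ f.natDegree := Nat.lt_succ_iff.mp (Finset.mem_range.mp hj)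
  have hpow : w ^ f.natDegree = w ^ (f.natDegree - j) * w ^ j := by
    rw [← pow_add, Nat.sub_add_cancel hjd]
  rw [eval_mul, eval_C, eval_X_pow, map_mul, map_pow, ← inv_eq_conj hw,
    Nat.add_sub_cancel, Nat.sub_sub_self hjd, hpow, inv_pow]
  field_simp

lemma neg_one_pow_sq {R : Type*} [Monoid R] [HasDistribNeg R] (n : ℕ) : ((-1 : R) ^ n) ^ 2 = 1 := by
  rw [← pow_mul', pow_mul, neg_one_sq, one_pow]

lemma natDegree_mul_comp_neg_X_le (g : ℂ[X]) : (g * g.comp (-X)).natDegree ≤ 2 * g.natDegree := by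
  refine natDegree_mul_le.trans ?_
  rw [natDegree_comp, natDegree_neg, natDegree_X]
  omega

lemma natDegree_sq_mul_comp_neg_X_lt (g : ℂ[X]) :
    ((g * g.comp (-X)) ^ 2).natDegree < 4 * g.natDegree + 2 := by
  have := natDegree_mul_comp_neg_X_le g
  exact natDegree_pow_le.trans_lt (by omega)

noncomputable def rudinShapiroStep (g : ℂ[X]) : ℂ[X] :=
  g + X ^ (g.natDegree + 1) * (dagger g).comp (-X)

lemma eval_rudinShapiroStep (g : ℂ[X]) {w : ℂ} (hw : ‖w‖ = 1) :
    (rudinShapiroStep g).eval w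
      = g.eval w + (-1) ^ g.natDegree * w ^ (2 * g.natDegree + 1) * conj (g.eval (-w)) := by
  rw [rudinShapiroStep, eval_add, eval_mul, eval_pow, eval_X, eval_comp, eval_neg, eval_X,
    eval_dagger g (by rwa [norm_neg]), neg_pow]
  ring

lemma eval_rudinShapiroStep_neg (g : ℂ[X]) {w : ℂ} (hw : ‖w‖ = 1) :
    (rudinShapiroStep g).eval (-w)
      = g.eval (-w) - (-1) ^ g.natDegree * w ^ (2 * g.natDegree + 1) * conj (g.eval w) := by
  rw [eval_rudinShapiroStep g (by rwa [norm_neg]), neg_neg, Odd.neg_pow ⟨_, rfl⟩]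
  ring

lemma n2_rudinShapiroStep (g : ℂ[X]) : n2 (rudinShapiroStep g) = 2 * n2 g := by
  have hq : (C ((-1 : ℂ) ^ g.natDegree) * (g * g.comp (-X))).natDegree < 2 * g.natDegree + 1 :=
    (natDegree_C_mul_le _ _).trans_lt (Nat.lt_succ_of_le (natDegree_mul_comp_neg_X_le g))
  rw [n2, n2, mul_left_comm,
    ← integral_add_comp_neg_add_re_circ (F := fun w => ‖g.eval w‖ ^ 2) (by fun_prop) 2 hq]
  congr 1
  refine integral_congr fun θ _ => ?_
  have hz := norm_circ θ
  rw [eval_rudinShapiroStep g hz, norm_sq_add_mul_conj (norm_neg_one_pow_mul_circ_pow _ _ θ)]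
  simp only [eval_mul, eval_pow, eval_comp, eval_neg, eval_one, eval_X, map_mul, map_pow, map_neg,
    map_one]
  ring_nf

lemma vprod_rudinShapiroStep (g : ℂ[X]) : vprod (rudinShapiroStep g) = 2 * n4 g := by
  rw [vprod, n4, mul_left_comm, ← integral_add_comp_neg_add_re_circ
    (F := fun w => ‖g.eval w‖ ^ 4) (by fun_prop) (-2) (natDegree_sq_mul_comp_neg_X_lt g)]
  congr 1
  refine integral_congr fun θ _ => ?_
  have hz := norm_circ θ
  rw [eval_rudinShapiroStep g hz, eval_rudinShapiroStep_neg g hz,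
    norm_sq_mul_add_mul_conj (norm_neg_one_pow_mul_circ_pow _ _ θ)]
  simp only [eval_pow, eval_mul, eval_comp, eval_neg, eval_X, map_mul, map_pow, map_neg, map_one,
    mul_pow, neg_one_pow_sq, one_mul]
  ring_nf

lemma n4_rudinShapiroStep (g : ℂ[X]) : n4 (rudinShapiroStep g) = 2 * n4 g + 4 * vprod g := by
  have key : ∫ θ in (0:ℝ)..2 * π, ‖(rudinShapiroStep g).eval (circ θ)‖ ^ 4
      = ∫ θ in (0:ℝ)..2 * π,
          (2 * ‖g.eval (circ θ)‖ ^ 4 + 4 * ‖g.eval (circ θ) * g.eval (-circ θ)‖ ^ 2) := by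
    apply mul_left_cancel₀ (two_ne_zero' ℝ)
    rw [← integral_add_comp_neg_circ (F := fun w => ‖(rudinShapiroStep g).eval w‖ ^ 4)
        (by fun_prop),
      ← integral_add_comp_neg_add_re_circ
        (F := fun w => 2 * ‖g.eval w‖ ^ 4 + 4 * ‖g.eval w * g.eval (-w)‖ ^ 2) (by fun_prop) 4
        (natDegree_sq_mul_comp_neg_X_lt g)]
    refine integral_congr fun θ _ => ?_
    have hz := norm_circ θ
    rw [eval_rudinShapiroStep g hz, eval_rudinShapiroStep_neg g hz,
      norm_pow_four_add_mul_conj (norm_neg_one_pow_mul_circ_pow _ _ θ), neg_neg]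
    simp only [eval_pow, eval_mul, eval_comp, eval_neg, eval_X, map_mul, map_pow, map_neg, map_one,
      mul_pow, neg_one_pow_sq, one_mul, norm_mul]
    ring_nf
  rw [n4, n4, vprod, key, integral_add (Continuous.intervalIntegrable (by fun_prop) _ _)
    (Continuous.intervalIntegrable (by fun_prop) _ _), integral_const_mul, integral_const_mul]
  ring

lemma closed_form_of_recurrence {x y : ℕ → ℝ} (hx : ∀ n, x (n + 1) = 2 * x n + 4 * y n)
    (hy : ∀ n, y (n + 1) = 2 * x n) (n : ℕ) :
    x n = 2 / 3 * (x 0 + y 0) * 4 ^ n + 1 / 3 * (x 0 - 2 * y 0) * (-2) ^ n := by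
  suffices x n = 2 / 3 * (x 0 + y 0) * 4 ^ n + 1 / 3 * (x 0 - 2 * y 0) * (-2) ^ n ∧
      y n = 1 / 3 * (x 0 + y 0) * 4 ^ n - 1 / 3 * (x 0 - 2 * y 0) * (-2) ^ n from this.1
  induction n with
  | zero => constructor <;> ring
  | succ n ih =>
    rw [hx, hy, ih.1, ih.2]
    constructor <;> ring

theorem borwein_mossinghoff_formula_general (f : ℕ → Polynomial ℂ)
    (hrec : ∀ n, f (n + 1) = f n +
      Polynomial.X ^ ((f n).natDegree + 1) * (dagger (f n)).comp (-Polynomial.X))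
    (n : ℕ) :
    n4 (f n) / (n2 (f n)) ^ 2
      = (2/3) * ((n4 (f 0) + vprod (f 0)) / (n2 (f 0)) ^ 2)
        + (-(1:ℝ)/2) ^ n * (1/3) * ((n4 (f 0) - 2 * vprod (f 0)) / (n2 (f 0)) ^ 2) := by
  have hstep (n : ℕ) : f (n + 1) = rudinShapiroStep (f n) := hrec n
  have hn2 (n : ℕ) : n2 (f n) = 2 ^ n * n2 (f 0) := by
    induction n with
    | zero => ring
    | succ n ih => rw [hstep, n2_rudinShapiroStep, ih]; ring
  have hn4 := closed_form_of_recurrence (x := fun n => n4 (f n)) (y := fun n => vprod (f n))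
    (fun n => by simp only [hstep, n4_rudinShapiroStep])
    (fun n => by simp only [hstep, vprod_rudinShapiroStep]) n
  rcases eq_or_ne (n2 (f 0)) 0 with h0 | h0
  · -- both sides are `0` by the convention `x / 0 = 0`
    rw [hn2, h0]
    simp
  rw [hn2, hn4, mul_pow, ← pow_mul, pow_mul', show (2 : ℝ) ^ 2 = 4 by norm_num,
    show -(1 : ℝ) / 2 = -2 / 4 by norm_num, div_pow]
  field_simp

/-- Borwein-Mossinghoff formula for ‖f_n‖₄⁴/‖f_n‖₂⁴ along a stem of
Rudin-Shapiro-like Littlewood polynomials. -/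
theorem borwein_mossinghoff_formula (f : ℕ → Polynomial ℂ)
    (hLittlewood : ∀ j ≤ (f 0).natDegree, (f 0).coeff j = 1 ∨ (f 0).coeff j = -1)
    (hrec : ∀ n, f (n + 1) = f n +
      Polynomial.X ^ ((f n).natDegree + 1) * (dagger (f n)).comp (-Polynomial.X))
    (n : ℕ) :
    n4 (f n) / (n2 (f n)) ^ 2
      = (2/3) * ((n4 (f 0) + vprod (f 0)) / (n2 (f 0)) ^ 2)
        + (-(1:ℝ)/2) ^ n * (1/3) * ((n4 (f 0) - 2 * vprod (f 0)) / (n2 (f 0)) ^ 2) :=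
  borwein_mossinghoff_formula_general f hrec n
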